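/- Let T be a rooted phylogenetic X-tree whose positive edge lengths satisfy the ultrametric condition, let φ : X → ℝ, and let 1 ≤ k ≤ |X|. Construct a set A as follows: for each connected component C of T[R(d_{k⁺})], choose one leaf of C maximising φ among the leaves of C, and let P be the resulting set (one chosen leaf per component); for each connected component C of T[R(d_{k⁻})], move from P into A one leaf maximising φ among the leaves of P in C; finally, move from P into A the k − k⁻ leaves of P with the largest φ-values. Then any set A obtained by this construction is a size-k maxPD set of T, and it satisfies Σ_{x∈A} φ(x) ≥ Σ_{x∈B} φ(x) for every size-k maxPD set B of T. -/

import Mathlib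

/-!
Rooted phylogenetic `X`-trees with positive edge lengths.

A tree on a finite vertex type `V` is encoded by its parent function: the root
has no parent, every other vertex has one, and iterating the parent function
reaches the root.  The edge into a non-root vertex `v` has length `len v`, and
`hgt v` is the distance from the root to `v`.  Leaves are the vertices with no
children; the taxon set `X` of the paper is the set `leaves` of leaves.
Every non-leaf, non-root vertex has out-degree (number of children) at least 2.
-/

noncomputable section

attribute [local instance] Classical.propDecidable

structure PhyloTree (V : Type) [Fintype V] [DecidableEq V] where
  root : V
  parent : V → Option V
  len : V → ℝ
  hgt : V → ℝ
  parent_root : parent root = none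
  parent_isSome : ∀ v, v ≠ root → (parent v).isSome
  reaches_root : ∀ v, Relation.ReflTransGen (fun a b => parent a = some b) v root
  hgt_root : hgt root = 0
  hgt_eq : ∀ v u, parent v = some u → hgt v = hgt u + len v
  len_pos : ∀ v, v ≠ root → 0 < len v
  outdeg_ge_two : ∀ v, v ≠ root → (∃ u, parent u = some v) →
    2 ≤ Set.ncard {u | parent u = some v}

namespace PhyloTree

variable {V : Type} [Fintype V] [DecidableEq V]

/-- `T.step a b` : `b` is the parent of `a`. -/
def step (T : PhyloTree V) (a b : V) : Prop := T.parent a = some b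

/-- `T.anc u v` : `u` is an ancestor of `v`, i.e. `u` lies on the (unique) path
from the root to `v` (reflexively). -/
def anc (T : PhyloTree V) (u v : V) : Prop := Relation.ReflTransGen T.step v u

/-- a leaf is a vertex with no children. -/
def IsLeaf (T : PhyloTree V) (v : V) : Prop := ∀ u, T.parent u ≠ some v

/-- the leaf set (the taxon set `X`). -/
def leaves (T : PhyloTree V) : Set V := {v | T.IsLeaf v}

/-- Phylogenetic diversity of a set `Y`: the total length of all edges `e`
whose set of descendant leaves meets `Y` (the edge into a non-root vertex `v`
has length `T.len v`). -/
def PD (T : PhyloTree V) (Y : Set V) : ℝ :=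
  ∑ v : V, if v ≠ T.root ∧ ∃ x ∈ Y, T.IsLeaf x ∧ T.anc v x then T.len v else 0

/-- the ultrametric condition: all leaves are at the same distance from the root. -/
def Ultrametric (T : PhyloTree V) : Prop :=
  ∀ x y, T.IsLeaf x → T.IsLeaf y → T.hgt x = T.hgt y

/-- `R d`: the set of vertices within distance `d` above some leaf. -/
def R (T : PhyloTree V) (d : ℝ) : Set V :=
  {v | ∃ x, T.IsLeaf x ∧ T.anc v x ∧ T.hgt x - T.hgt v ≤ d}

/-- adjacency in the forest induced by `T` on a vertex set `S`. -/
def adjIn (T : PhyloTree V) (S : Set V) (u v : V) : Prop :=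
  u ∈ S ∧ v ∈ S ∧ (T.parent u = some v ∨ T.parent v = some u)

/-- the connected components of the forest induced by `T` on `S`. -/
def components (T : PhyloTree V) (S : Set V) : Set (Set V) :=
  {C | ∃ v ∈ S, C = S ∩ {u | Relation.ReflTransGen (T.adjIn S) v u}}

/-- `c d`: the number of connected components of the forest `T[R(d)]`. -/
def ccount (T : PhyloTree V) (d : ℝ) : ℕ := (T.components (T.R d)).ncard

/-- `k` is a branching value if `T[R(d)]` has exactly `k` components for some `d ≥ 0`. -/
def IsBranchingValue (T : PhyloTree V) (k : ℕ) : Prop := ∃ d : ℝ, 0 ≤ d ∧ T.ccount d = k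

/-- the branching distance `d_k = min {d : c(d) = k}`. -/
def branchDist (T : PhyloTree V) (k : ℕ) : ℝ := sInf {d | 0 ≤ d ∧ T.ccount d = k}

/-- `k⁻`: the largest branching value `≤ k`. -/
def kminus (T : PhyloTree V) (k : ℕ) : ℕ := sSup {j | j ≤ k ∧ T.IsBranchingValue j}

/-- `k⁺`: the smallest branching value `≥ k`. -/
def kplus (T : PhyloTree V) (k : ℕ) : ℕ := sInf {j | k ≤ j ∧ T.IsBranchingValue j}

/-- `A` is a size-`k` maxPD set. -/
def IsMaxPD (T : PhyloTree V) (k : ℕ) (A : Set V) : Prop :=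
  A ⊆ T.leaves ∧ A.ncard = k ∧ ∀ Y ⊆ T.leaves, Y.ncard = k → T.PD Y ≤ T.PD A

/-- `A` is a size-`k` minPD set. -/
def IsMinPD (T : PhyloTree V) (k : ℕ) (A : Set V) : Prop :=
  A ⊆ T.leaves ∧ A.ncard = k ∧ ∀ Y ⊆ T.leaves, Y.ncard = k → T.PD A ≤ T.PD Y

/-- `m T k`: the number of size-`k` maxPD sets of `T`. -/
def m (T : PhyloTree V) (k : ℕ) : ℕ := {A : Set V | T.IsMaxPD k A}.ncard

/-- `T` is binary: every non-leaf vertex has exactly two children. -/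
def Binary (T : PhyloTree V) : Prop :=
  ∀ v, ¬ T.IsLeaf v → Set.ncard {u | T.parent u = some v} = 2

end PhyloTree

/-!
With all leaves at height `h`, the components of `T[R(d)]` are the clades below the vertices
whose incoming edge spans the level `h - d`. Cutting the tree at all vertex heights turns `PD(Y)`
into `∑ₜ gap(t) · crossings(Y, t)`, where `crossings(Y, t)` counts the components at level `t`
met by `Y`, and a `k`-set meets at most `k` of them. The constructed `A` attains this bound
at every level: at or below the level of `d_{k⁻}` it meets every component (through `A₀`); above
it there are at least `k⁺` components, refining those at the level of `d_{k⁺}`, which separate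
`A` (one leaf of `P` each). Hence `A` is maxPD, and every maxPD `B` attains the bound as well, so
its leaves lie in distinct components of `T[R(d_{k⁺})]` and it meets every component of
`T[R(d_{k⁻})]`. Replacing each leaf of `B` by the leaf of `P` in its component only increases `φ`,
and a greedy exchange compares the result with `A`.
-/

namespace Finset

variable {α β : Type*} {f : α → ℝ}

theorem sum_le_sum_of_forall_le_of_card_eq {s u : Finset α} (hcard : s.card = u.card)
    (hle : ∀ x ∈ s, ∀ y ∈ u, f x ≤ f y) : ∑ x ∈ s, f x ≤ ∑ y ∈ u, f y := by
  rcases u.eq_empty_or_nonempty with rfl | hu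
  · simp [card_eq_zero.mp hcard]
  calc ∑ x ∈ s, f x ≤ s.card • u.inf' hu f := by
        rw [← sum_const]
        exact sum_le_sum fun x hx => le_inf' hu _ fun y hy => hle x hx y hy
    _ = u.card • u.inf' hu f := by rw [hcard]
    _ ≤ ∑ y ∈ u, f y := card_nsmul_le_sum u f _ fun y hy => inf'_le f hy

variable [DecidableEq α]

theorem sum_le_sum_of_subset_union {s u w : Finset α} (hs : s ⊆ u ∪ w) (hcard : s.card = u.card)
    (hle : ∀ y ∈ u, ∀ x ∈ w, f x ≤ f y) : ∑ x ∈ s, f x ≤ ∑ y ∈ u, f y := by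
  have hsu : ∑ x ∈ s \ u, f x ≤ ∑ y ∈ u \ s, f y := by
    refine sum_le_sum_of_forall_le_of_card_eq (card_sdiff_comm hcard) fun x hx y hy => ?_
    have hxw : x ∈ w := by
      obtain ⟨hxs, hxu⟩ := mem_sdiff.mp hx
      simpa [hxu] using hs hxs
    exact hle y (mem_sdiff.mp hy).1 x hxw
  rw [← sum_inter_add_sum_sdiff s u, ← sum_inter_add_sum_sdiff u s, inter_comm]
  linarith

theorem sum_le_sum_of_greedy (c : α → β) {P A₀ A Q : Finset α} (hA₀A : A₀ ⊆ A) (hQP : Q ⊆ P)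
    (hcard : Q.card = A.card) (hinj : Set.InjOn c A₀)
    (hmax : ∀ a ∈ A₀, ∀ y ∈ P, c y = c a → f y ≤ f a) (hmeet : ∀ a ∈ A₀, ∃ q ∈ Q, c q = c a)
    (htop : ∀ a ∈ A \ A₀, ∀ p ∈ P \ A, f p ≤ f a) :
    ∑ q ∈ Q, f q ≤ ∑ a ∈ A, f a := by
  have hpick : ∀ a ∈ A₀, ∃ q ∈ Q, c q = c a ∧ (a ∈ Q → q = a) := by
    intro a ha
    by_cases haQ : a ∈ Q
    · exact ⟨a, haQ, rfl, fun _ => rfl⟩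
    · obtain ⟨q, hq, hqa⟩ := hmeet a ha
      exact ⟨q, hq, hqa, fun h => absurd h haQ⟩
  choose! q hqQ hqc hqa using hpick
  have hqinj : Set.InjOn q A₀ := fun a ha b hb hab =>
    hinj ha hb (by rw [← hqc a ha, ← hqc b hb, hab])
  set QT := A₀.image q
  have hQT : QT ⊆ Q := image_subset_iff.mpr hqQ
  have hsumQT : ∑ x ∈ QT, f x ≤ ∑ a ∈ A₀, f a := by
    rw [sum_image hqinj]
    exact sum_le_sum fun a ha => hmax a ha (q a) (hQP (hqQ a ha)) (hqc a ha)
  -- an element of `A₀ ∩ Q` is its own representative, so `Q \ QT` avoids `A₀`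
  have hrest : Q \ QT ⊆ (A \ A₀) ∪ (P \ A) := by
    intro x hx
    obtain ⟨hxQ, hxQT⟩ := mem_sdiff.mp hx
    have hxA₀ : x ∉ A₀ := fun hxA₀ => hxQT (mem_image.mpr ⟨x, hxA₀, hqa x hxA₀ hxQ⟩)
    by_cases hxA : x ∈ A
    · exact mem_union_left _ (mem_sdiff.mpr ⟨hxA, hxA₀⟩)
    · exact mem_union_right _ (mem_sdiff.mpr ⟨hQP hxQ, hxA⟩)
  have hrestcard : (Q \ QT).card = (A \ A₀).card := by
    rw [card_sdiff_of_subset hQT, card_sdiff_of_subset hA₀A, card_image_of_injOn hqinj, hcard]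
  have hsumrest := sum_le_sum_of_subset_union hrest hrestcard htop
  rw [← sum_sdiff hQT, ← sum_sdiff hA₀A]
  linarith

end Finset

namespace PhyloTree

variable {V : Type} [Fintype V] [DecidableEq V] (T : PhyloTree V)

lemma hgt_lt_hgt_of_parent_eq {a b : V} (hab : T.parent a = some b) : T.hgt b < T.hgt a := by
  have ha : a ≠ T.root := by
    rintro rfl
    simp [T.parent_root] at hab
  linarith [T.hgt_eq a b hab, T.len_pos a ha]

lemma hgt_le_hgt_of_anc {u v : V} (huv : T.anc u v) : T.hgt u ≤ T.hgt v := by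
  induction huv with
  | refl => exact le_rfl
  | tail _ hstep ih => exact (T.hgt_lt_hgt_of_parent_eq hstep).le.trans ih

lemma anc_trans {u v w : V} (huv : T.anc u v) (hvw : T.anc v w) : T.anc u w := hvw.trans huv

lemma hgt_nonneg (v : V) : 0 ≤ T.hgt v := T.hgt_root ▸ T.hgt_le_hgt_of_anc (T.reaches_root v)

lemma anc_total {u v x : V} (hu : T.anc u x) (hv : T.anc v x) : T.anc u v ∨ T.anc v u := by
  unfold anc at hu hv ⊢
  induction hu using Relation.ReflTransGen.head_induction_on with
  | refl => exact Or.inr hv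
  | head hstep htail ih =>
    rcases Relation.ReflTransGen.cases_head hv with rfl | ⟨c, hc, hcv⟩
    · exact Or.inl (htail.head hstep)
    · obtain rfl : c = _ := Option.some.inj (hc.symm.trans hstep)
      exact ih hcv

lemma eq_of_anc_of_hgt_parent_lt {u w : V} (huw : T.anc u w)
    (hw : ∀ p, T.parent w = some p → T.hgt p < T.hgt u) : u = w := by
  rcases Relation.ReflTransGen.cases_head huw with h | ⟨p, hp, hpu⟩
  · exact h.symm
  · exact absurd (T.hgt_le_hgt_of_anc hpu) (not_le.mpr (hw p hp))

lemma exists_leaf_anc (v : V) : ∃ x, T.IsLeaf x ∧ T.anc v x := by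
  obtain ⟨x, hx, hmax⟩ := (Finset.univ.filter (T.anc v)).exists_max_image T.hgt
    ⟨v, Finset.mem_filter.mpr ⟨Finset.mem_univ _, Relation.ReflTransGen.refl⟩⟩
  have hvx : T.anc v x := (Finset.mem_filter.mp hx).2
  refine ⟨x, fun u hu => ?_, hvx⟩
  have := hmax u (Finset.mem_filter.mpr ⟨Finset.mem_univ _, hvx.head hu⟩)
  linarith [T.hgt_lt_hgt_of_parent_eq hu]

/-- `w ∈ T.tops t`: the edge into `w` spans the level `t` (for `t ≤ 0` only the root qualifies).
These are the tops of the components of the forest of vertices of height at least `t`. -/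
def tops (t : ℝ) : Set V := {w | t ≤ T.hgt w ∧ ∀ u, T.parent w = some u → T.hgt u < t}

lemma exists_mem_tops_anc {t : ℝ} {v : V} (hv : t ≤ T.hgt v) : ∃ w ∈ T.tops t, T.anc w v := by
  revert hv
  induction T.reaches_root v using Relation.ReflTransGen.head_induction_on with
  | refl => exact fun hv => ⟨T.root, ⟨hv, fun u hu => by simp [T.parent_root] at hu⟩, .refl⟩
  | @head a c hac _ ih =>
    intro ha
    by_cases hc : t ≤ T.hgt c
    · obtain ⟨w, hw, hwc⟩ := ih hc
      exact ⟨w, hw, Relation.ReflTransGen.head hac hwc⟩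
    · refine ⟨a, ⟨ha, fun u hu => ?_⟩, .refl⟩
      obtain rfl : u = c := Option.some.inj (hu.symm.trans hac)
      exact not_le.mp hc

lemma eq_of_mem_tops_of_anc {t : ℝ} {w₁ w₂ v : V} (h₁ : w₁ ∈ T.tops t) (h₂ : w₂ ∈ T.tops t)
    (hv₁ : T.anc w₁ v) (hv₂ : T.anc w₂ v) : w₁ = w₂ := by
  rcases T.anc_total hv₁ hv₂ with h | h
  · exact T.eq_of_anc_of_hgt_parent_lt h fun p hp => (h₂.2 p hp).trans_le h₁.1
  · exact (T.eq_of_anc_of_hgt_parent_lt h fun p hp => (h₁.2 p hp).trans_le h₂.1).symm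

/-- The top of the component of `v` at level `t` (junk value `v` when `T.hgt v < t`). -/
def top (t : ℝ) (v : V) : V :=
  if hv : t ≤ T.hgt v then (T.exists_mem_tops_anc hv).choose else v

variable {T}

lemma top_mem_tops {t : ℝ} {v : V} (hv : t ≤ T.hgt v) : T.top t v ∈ T.tops t := by
  rw [top, dif_pos hv]
  exact (T.exists_mem_tops_anc hv).choose_spec.1

lemma anc_top {t : ℝ} {v : V} (hv : t ≤ T.hgt v) : T.anc (T.top t v) v := by
  rw [top, dif_pos hv]
  exact (T.exists_mem_tops_anc hv).choose_spec.2

lemma top_eq_of_anc {t : ℝ} {w v : V} (hw : w ∈ T.tops t) (hwv : T.anc w v) : T.top t v = w :=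
  have hv : t ≤ T.hgt v := hw.1.trans (T.hgt_le_hgt_of_anc hwv)
  T.eq_of_mem_tops_of_anc (top_mem_tops hv) hw (anc_top hv) hwv

lemma top_top {t t' : ℝ} (htt' : t ≤ t') {v : V} (hv : t' ≤ T.hgt v) :
    T.top t (T.top t' v) = T.top t v := by
  have hw' := top_mem_tops hv
  have hw := top_mem_tops (htt'.trans hw'.1)
  exact (top_eq_of_anc hw (T.anc_trans (anc_top (htt'.trans hw'.1)) (anc_top hv))).symm

variable (T)

lemma tops_zero : T.tops 0 = {T.root} := by
  ext w
  refine ⟨fun hw => ?_, ?_⟩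
  · by_contra hne
    obtain ⟨u, hu⟩ := Option.isSome_iff_exists.mp (T.parent_isSome w hne)
    exact absurd (hw.2 u hu) (not_lt.mpr (T.hgt_nonneg u))
  · rintro rfl
    exact ⟨T.hgt_root.ge, fun u hu => by simp [T.parent_root] at hu⟩

lemma tops_congr {t t' : ℝ} (htt' : ∀ v, t ≤ T.hgt v ↔ t' ≤ T.hgt v) : T.tops t = T.tops t' := by
  ext w
  simp only [tops, Set.mem_ofPred_eq, ← not_le, htt']

def LeavesAtHeight (h : ℝ) : Prop := ∀ x, T.IsLeaf x → T.hgt x = h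

lemma Ultrametric.exists_leavesAtHeight {T : PhyloTree V} (hU : T.Ultrametric) :
    ∃ h, T.LeavesAtHeight h := by
  obtain ⟨x₀, hx₀, -⟩ := T.exists_leaf_anc T.root
  exact ⟨T.hgt x₀, fun x hx => hU x x₀ hx hx₀⟩

namespace LeavesAtHeight

variable {T} {h : ℝ} (hh : T.LeavesAtHeight h)
include hh

lemma hgt_le_height (v : V) : T.hgt v ≤ h := by
  obtain ⟨x, hx, hvx⟩ := T.exists_leaf_anc v
  exact hh x hx ▸ T.hgt_le_hgt_of_anc hvx

lemma height_nonneg : 0 ≤ h := (T.hgt_nonneg T.root).trans (hh.hgt_le_height T.root)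

lemma le_hgt_of_isLeaf {t : ℝ} (ht : t ≤ h) {x : V} (hx : T.IsLeaf x) : t ≤ T.hgt x :=
  (hh x hx).symm ▸ ht

lemma tops_height : T.tops h = T.leaves := by
  ext w
  refine ⟨fun hw u hu => ?_, fun hw => ⟨(hh w hw).ge, fun u hu => ?_⟩⟩
  · linarith [T.hgt_lt_hgt_of_parent_eq hu, hh.hgt_le_height u, hw.1]
  · exact hh w hw ▸ T.hgt_lt_hgt_of_parent_eq hu

lemma image_top_tops {t t' : ℝ} (htt' : t ≤ t') (ht' : t' ≤ h) :
    T.top t '' T.tops t' = T.tops t := by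
  ext w
  refine ⟨?_, fun hw => ?_⟩
  · rintro ⟨w', hw', rfl⟩
    exact top_mem_tops (htt'.trans hw'.1)
  · obtain ⟨x, hx, hwx⟩ := T.exists_leaf_anc w
    have hxt' := hh.le_hgt_of_isLeaf ht' hx
    exact ⟨T.top t' x, top_mem_tops hxt', by rw [top_top htt' hxt', top_eq_of_anc hw hwx]⟩

lemma image_top_leaves {t : ℝ} (ht : t ≤ h) : T.top t '' T.leaves = T.tops t := by
  rw [← hh.tops_height, hh.image_top_tops ht le_rfl]

lemma ncard_tops_le_ncard_tops {t t' : ℝ} (htt' : t ≤ t') (ht' : t' ≤ h) :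
    (T.tops t).ncard ≤ (T.tops t').ncard := by
  rw [← hh.image_top_tops htt' ht']
  exact Set.ncard_image_le (Set.toFinite _)

lemma injOn_top_of_ncard_tops_eq {t t' : ℝ} (htt' : t ≤ t') (ht' : t' ≤ h)
    (hc : (T.tops t).ncard = (T.tops t').ncard) : Set.InjOn (T.top t) (T.tops t') :=
  (Set.ncard_image_iff (Set.toFinite _)).mp (by rw [hh.image_top_tops htt' ht', hc])

end LeavesAtHeight

variable {T}

def clade (T : PhyloTree V) (w : V) : Set V := {u | T.anc w u}

lemma reflTransGen_adjIn_of_anc {t : ℝ} {w u : V} (hw : t ≤ T.hgt w) (hwu : T.anc w u) :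
    Relation.ReflTransGen (T.adjIn {v | t ≤ T.hgt v}) w u ∧
      Relation.ReflTransGen (T.adjIn {v | t ≤ T.hgt v}) u w := by
  induction hwu using Relation.ReflTransGen.head_induction_on with
  | refl => exact ⟨.refl, .refl⟩
  | @head a c hac hcw ih =>
    have hc : t ≤ T.hgt c := hw.trans (T.hgt_le_hgt_of_anc hcw)
    have ha : t ≤ T.hgt a := hc.trans (T.hgt_lt_hgt_of_parent_eq hac).le
    exact ⟨ih.1.tail ⟨hc, ha, Or.inr hac⟩, ih.2.head ⟨ha, hc, Or.inl hac⟩⟩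

lemma anc_of_reflTransGen_adjIn {t : ℝ} {w u : V} (hw : w ∈ T.tops t)
    (hwu : Relation.ReflTransGen (T.adjIn {v | t ≤ T.hgt v}) w u) : T.anc w u := by
  induction hwu with
  | refl => exact .refl
  | @tail b c _ hbc ih =>
    obtain ⟨-, hc, hcb | hbc⟩ := hbc
    · rcases T.anc_total ih (Relation.ReflTransGen.single hcb) with hwc | hcw
      · exact hwc
      · obtain rfl := T.eq_of_anc_of_hgt_parent_lt hcw fun p hp => (hw.2 p hp).trans_le hc
        exact .refl
    · exact Relation.ReflTransGen.head hbc ih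

lemma setOf_le_hgt_inter_reflTransGen_eq_clade {t : ℝ} {w : V} (hw : w ∈ T.tops t) :
    {v | t ≤ T.hgt v} ∩ {u | Relation.ReflTransGen (T.adjIn {v | t ≤ T.hgt v}) w u} =
      T.clade w := by
  ext u
  refine ⟨fun hu => anc_of_reflTransGen_adjIn hw hu.2, fun hu => ?_⟩
  exact ⟨hw.1.trans (T.hgt_le_hgt_of_anc hu), (reflTransGen_adjIn_of_anc hw.1 hu).1⟩

namespace LeavesAtHeight

variable {h : ℝ} (hh : T.LeavesAtHeight h)
include hh

lemma R_eq (d : ℝ) : T.R d = {v | h - d ≤ T.hgt v} := by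
  ext v
  refine ⟨fun ⟨x, hx, hvx, hd⟩ => ?_, fun hv => ?_⟩
  · have := hh x hx
    simp only [Set.mem_ofPred_eq]
    linarith
  · obtain ⟨x, hx, hvx⟩ := T.exists_leaf_anc v
    refine ⟨x, hx, hvx, ?_⟩
    have := hh x hx
    simp only [Set.mem_ofPred_eq] at hv
    linarith

lemma components_R_eq (d : ℝ) : T.components (T.R d) = T.clade '' T.tops (h - d) := by
  ext C
  rw [hh.R_eq]
  constructor
  · rintro ⟨v, hv, rfl⟩
    obtain ⟨w, hw, hwv⟩ := T.exists_mem_tops_anc hv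
    refine ⟨w, hw, ?_⟩
    rw [← setOf_le_hgt_inter_reflTransGen_eq_clade hw]
    obtain ⟨hwv', hvw'⟩ := reflTransGen_adjIn_of_anc hw.1 hwv
    ext u
    exact and_congr_right fun _ => ⟨fun hwu => hvw'.trans hwu, fun hvu => hwv'.trans hvu⟩
  · rintro ⟨w, hw, rfl⟩
    exact ⟨w, hw.1, (setOf_le_hgt_inter_reflTransGen_eq_clade hw).symm⟩

lemma ccount_eq (d : ℝ) : T.ccount d = (T.tops (h - d)).ncard := by
  rw [ccount, hh.components_R_eq]
  refine Set.InjOn.ncard_image fun w₁ h₁ w₂ h₂ hcl => ?_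
  have hw₁ : w₁ ∈ T.clade w₂ := hcl ▸ (Relation.ReflTransGen.refl : T.anc w₁ w₁)
  exact T.eq_of_mem_tops_of_anc h₁ h₂ .refl hw₁

end LeavesAtHeight

section Levels

variable (T)

open Finset

def hgtSet : Finset ℝ := univ.image T.hgt

/-- The largest vertex height below `t`, or `0` if there is none. -/
def prevHgt (t : ℝ) : ℝ :=
  if hne : (T.hgtSet.filter (· < t)).Nonempty then (T.hgtSet.filter (· < t)).max' hne else 0

def gap (t : ℝ) : ℝ := t - T.prevHgt t

def crossings (Y : Set V) (t : ℝ) : ℕ :=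
  {w | w ∈ T.tops t ∧ ∃ y ∈ Y, T.IsLeaf y ∧ T.anc w y}.ncard

lemma mem_hgtSet (v : V) : T.hgt v ∈ T.hgtSet := mem_image_of_mem _ (mem_univ v)

lemma nonneg_of_mem_hgtSet {t : ℝ} (ht : t ∈ T.hgtSet) : 0 ≤ t := by
  obtain ⟨v, -, rfl⟩ := mem_image.mp ht
  exact T.hgt_nonneg v

lemma gap_zero : T.gap 0 = 0 := by
  have hemp : ¬ (T.hgtSet.filter (· < (0 : ℝ))).Nonempty := fun ⟨t, ht⟩ =>
    (mem_filter.mp ht).2.not_ge (T.nonneg_of_mem_hgtSet (mem_filter.mp ht).1)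
  simp [gap, prevHgt, hemp]

lemma gap_pos {t : ℝ} (hpos : 0 < t) : 0 < T.gap t := by
  have hne : (T.hgtSet.filter (· < t)).Nonempty :=
    ⟨0, mem_filter.mpr ⟨T.hgt_root ▸ T.mem_hgtSet T.root, hpos⟩⟩
  have := (mem_filter.mp (max'_mem _ hne)).2
  rw [gap, prevHgt, dif_pos hne]
  linarith

lemma gap_nonneg {t : ℝ} (ht : t ∈ T.hgtSet) : 0 ≤ T.gap t := by
  rcases (T.nonneg_of_mem_hgtSet ht).eq_or_lt with rfl | hpos
  · exact T.gap_zero.ge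
  · exact (T.gap_pos hpos).le

lemma sum_gap_filter_eq_sub {a b : ℝ} (ha : a ∈ T.hgtSet) (hb : b ∈ T.hgtSet) (hab : a ≤ b) :
    ∑ t ∈ T.hgtSet.filter (fun t => a < t ∧ t ≤ b), T.gap t = b - a := by
  induction hn : (T.hgtSet.filter (· < b)).card using Nat.strong_induction_on generalizing b with
  | _ n ih =>
    rcases hab.eq_or_lt with rfl | hlt
    · rw [filter_false_of_mem fun t _ ht => ht.1.not_ge ht.2, sum_empty, sub_self]
    have hne : (T.hgtSet.filter (· < b)).Nonempty := ⟨a, mem_filter.mpr ⟨ha, hlt⟩⟩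
    set p := (T.hgtSet.filter (· < b)).max' hne
    obtain ⟨hp, hpb⟩ := mem_filter.mp (max'_mem _ hne)
    have hle_p : ∀ t ∈ T.hgtSet, t < b → t ≤ p := fun t ht htb =>
      le_max' _ t (mem_filter.mpr ⟨ht, htb⟩)
    have hsplit : T.hgtSet.filter (fun t => a < t ∧ t ≤ b) =
        insert b (T.hgtSet.filter (fun t => a < t ∧ t ≤ p)) := by
      ext t
      simp only [mem_filter, mem_insert]
      constructor
      · rintro ⟨ht, hat, htb⟩
        rcases htb.eq_or_lt with rfl | htb
        · exact Or.inl rfl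
        · exact Or.inr ⟨ht, hat, hle_p t ht htb⟩
      · rintro (rfl | ⟨ht, hat, htp⟩)
        · exact ⟨hb, hlt, le_rfl⟩
        · exact ⟨ht, hat, htp.trans hpb.le⟩
    have hcard : (T.hgtSet.filter (· < p)).card < n := by
      rw [← hn]
      refine card_lt_card ⟨fun t ht => ?_, fun hsub => ?_⟩
      · exact mem_filter.mpr ⟨(mem_filter.mp ht).1, (mem_filter.mp ht).2.trans hpb⟩
      · exact lt_irrefl p (mem_filter.mp (hsub (mem_filter.mpr ⟨hp, hpb⟩))).2
    rw [hsplit, sum_insert fun hb' => (mem_filter.mp hb').2.2.not_gt hpb,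
      ih _ hcard hp (hle_p a ha hlt) rfl, gap, prevHgt, dif_pos hne]
    ring

/-- Splitting the edge into `v` at the vertex heights strictly inside it. -/
lemma sum_gap_filter_mem_tops (v : V) :
    ∑ t ∈ T.hgtSet.filter (v ∈ T.tops ·), T.gap t = if v = T.root then 0 else T.len v := by
  split_ifs with hv
  · subst hv
    refine sum_eq_zero fun t ht => ?_
    obtain ⟨ht, hroot⟩ := mem_filter.mp ht
    obtain rfl : t = 0 := le_antisymm (T.hgt_root ▸ hroot.1) (T.nonneg_of_mem_hgtSet ht)
    exact T.gap_zero
  · obtain ⟨u, hu⟩ := Option.isSome_iff_exists.mp (T.parent_isSome v hv)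
    have hfilter : T.hgtSet.filter (v ∈ T.tops ·) =
        T.hgtSet.filter (fun t => T.hgt u < t ∧ t ≤ T.hgt v) := by
      refine filter_congr fun t _ => ?_
      simp only [tops, Set.mem_ofPred_eq, hu, Option.some.injEq, forall_eq']
      exact and_comm
    rw [hfilter, T.sum_gap_filter_eq_sub (T.mem_hgtSet u) (T.mem_hgtSet v)
      (T.hgt_lt_hgt_of_parent_eq hu).le, T.hgt_eq v u hu]
    ring

lemma PD_eq_sum_gap_mul_crossings (Y : Set V) :
    T.PD Y = ∑ t ∈ T.hgtSet, T.gap t * T.crossings Y t := by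
  let meets : V → Prop := fun w => ∃ y ∈ Y, T.IsLeaf y ∧ T.anc w y
  calc T.PD Y = ∑ v, if meets v then ∑ t ∈ T.hgtSet.filter (v ∈ T.tops ·), T.gap t else 0 := by
        refine sum_congr rfl fun v _ => ?_
        rw [T.sum_gap_filter_mem_tops]
        by_cases hv : v = T.root <;> by_cases hm : meets v <;> simp [hv, hm, meets]
    _ = ∑ t ∈ T.hgtSet, ∑ v, if v ∈ T.tops t ∧ meets v then T.gap t else 0 := by
        rw [sum_comm]
        refine sum_congr rfl fun v _ => ?_
        rw [sum_filter]
        split_ifs with hm <;> simp [hm]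
    _ = ∑ t ∈ T.hgtSet, T.gap t * T.crossings Y t := by
        refine sum_congr rfl fun t _ => ?_
        rw [← sum_filter, sum_const, nsmul_eq_mul, mul_comm, crossings,
          ← Set.ncard_coe_finset, coe_filter]
        simp only [mem_univ, true_and, meets]

lemma PD_le_PD_of_crossings_le {Y Z : Set V}
    (hYZ : ∀ t ∈ T.hgtSet, T.crossings Y t ≤ T.crossings Z t) : T.PD Y ≤ T.PD Z := by
  rw [T.PD_eq_sum_gap_mul_crossings, T.PD_eq_sum_gap_mul_crossings]
  exact sum_le_sum fun t ht =>
    mul_le_mul_of_nonneg_left (Nat.cast_le.mpr (hYZ t ht)) (T.gap_nonneg ht)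

lemma crossings_eq_of_PD_le {Y Z : Set V}
    (hYZ : ∀ t ∈ T.hgtSet, T.crossings Y t ≤ T.crossings Z t) (hPD : T.PD Z ≤ T.PD Y) :
    ∀ t ∈ T.hgtSet, 0 < t → T.crossings Y t = T.crossings Z t := by
  intro t ht hpos
  have hle : ∀ s ∈ T.hgtSet, T.gap s * T.crossings Y s ≤ T.gap s * T.crossings Z s :=
    fun s hs => mul_le_mul_of_nonneg_left (Nat.cast_le.mpr (hYZ s hs)) (T.gap_nonneg hs)
  have heq := (sum_eq_sum_iff_of_le hle).mp (by
    rw [← T.PD_eq_sum_gap_mul_crossings, ← T.PD_eq_sum_gap_mul_crossings]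
    exact le_antisymm (T.PD_le_PD_of_crossings_le hYZ) hPD) t ht
  exact_mod_cast mul_left_cancel₀ (T.gap_pos hpos).ne' heq

end Levels

namespace LeavesAtHeight

variable {h : ℝ} (hh : T.LeavesAtHeight h)
include hh

lemma height_mem_hgtSet : h ∈ T.hgtSet := by
  obtain ⟨x, hx, -⟩ := T.exists_leaf_anc T.root
  exact hh x hx ▸ T.mem_hgtSet x

lemma le_height_of_mem_hgtSet {t : ℝ} (ht : t ∈ T.hgtSet) : t ≤ h := by
  obtain ⟨v, -, rfl⟩ := Finset.mem_image.mp ht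
  exact hh.hgt_le_height v

lemma isBranchingValue_one : T.IsBranchingValue 1 :=
  ⟨h, hh.height_nonneg, by rw [hh.ccount_eq, sub_self, T.tops_zero, Set.ncard_singleton]⟩

lemma isBranchingValue_ncard_leaves : T.IsBranchingValue T.leaves.ncard :=
  ⟨0, le_rfl, by rw [hh.ccount_eq, sub_zero, hh.tops_height]⟩

/-- `c(d)` only changes where `h - d` is a vertex height. -/
lemma exists_ccount_eq_of_sub_mem_hgtSet {d : ℝ} (hd : 0 ≤ d) :
    ∃ d' ≤ d, 0 ≤ d' ∧ h - d' ∈ T.hgtSet ∧ T.ccount d' = T.ccount d := by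
  have hne : (T.hgtSet.filter (h - d ≤ ·)).Nonempty :=
    ⟨h, Finset.mem_filter.mpr ⟨hh.height_mem_hgtSet, by linarith⟩⟩
  set s := (T.hgtSet.filter (h - d ≤ ·)).min' hne
  obtain ⟨hs, hds⟩ := Finset.mem_filter.mp (Finset.min'_mem _ hne)
  have hsh := hh.le_height_of_mem_hgtSet hs
  refine ⟨h - s, by linarith, by linarith, by rwa [sub_sub_cancel], ?_⟩
  rw [hh.ccount_eq, hh.ccount_eq, sub_sub_cancel]
  congr 1
  refine T.tops_congr fun v => ⟨fun hv => hds.trans hv, fun hv => ?_⟩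
  exact Finset.min'_le _ _ (Finset.mem_filter.mpr ⟨T.mem_hgtSet v, hv⟩)

lemma branchDist_spec {j : ℕ} (hj : T.IsBranchingValue j) :
    0 ≤ T.branchDist j ∧ T.ccount (T.branchDist j) = j ∧ h - T.branchDist j ∈ T.hgtSet ∧
      ∀ d, 0 ≤ d → T.ccount d = j → T.branchDist j ≤ d := by
  set D := {d : ℝ | 0 ≤ d ∧ T.ccount d = j}
  set D' := {d ∈ D | h - d ∈ T.hgtSet}
  have hbdd : BddBelow D := ⟨0, fun d hd => hd.1⟩
  have hbelow : ∀ d ∈ D, ∃ d' ∈ D', d' ≤ d := fun d ⟨hd, hdj⟩ => by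
    obtain ⟨d', hd'd, hd', hmem, hc⟩ := hh.exists_ccount_eq_of_sub_mem_hgtSet hd
    exact ⟨d', ⟨⟨hd', hc.trans hdj⟩, hmem⟩, hd'd⟩
  obtain ⟨d₀, hd₀⟩ := hj
  have hD'ne : D'.Nonempty := (hbelow d₀ hd₀).imp fun _ h => h.1
  have hD'fin : D'.Finite :=
    ((T.hgtSet.finite_toSet).image (h - ·)).subset fun d hd => ⟨h - d, hd.2, sub_sub_cancel h d⟩
  have hinf : sInf D = sInf D' := by
    refine le_antisymm (csInf_le_csInf hbdd hD'ne fun d hd => hd.1) (le_csInf ⟨d₀, hd₀⟩ ?_)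
    intro d hd
    obtain ⟨d', hd', hd'd⟩ := hbelow d hd
    exact (csInf_le hD'fin.bddBelow hd').trans hd'd
  have hmem : sInf D ∈ D' := by
    rw [hinf]
    exact hD'ne.csInf_mem hD'fin
  exact ⟨hmem.1.1, hmem.1.2, hmem.2, fun d hd hdj => csInf_le hbdd ⟨hd, hdj⟩⟩

lemma kminus_spec {k : ℕ} (hk : 1 ≤ k) :
    T.kminus k ≤ k ∧ T.IsBranchingValue (T.kminus k) ∧
      ∀ j ≤ k, T.IsBranchingValue j → j ≤ T.kminus k := by
  have hne : {j | j ≤ k ∧ T.IsBranchingValue j}.Nonempty := ⟨1, hk, hh.isBranchingValue_one⟩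
  have hbdd : BddAbove {j | j ≤ k ∧ T.IsBranchingValue j} := ⟨k, fun j hj => hj.1⟩
  exact ⟨(Nat.sSup_mem hne hbdd).1, (Nat.sSup_mem hne hbdd).2,
    fun j hj hbr => le_csSup hbdd ⟨hj, hbr⟩⟩

lemma kplus_spec {k : ℕ} (hkn : k ≤ T.leaves.ncard) :
    k ≤ T.kplus k ∧ T.IsBranchingValue (T.kplus k) :=
  Nat.sInf_mem (s := {j | k ≤ j ∧ T.IsBranchingValue j})
    ⟨_, hkn, hh.isBranchingValue_ncard_leaves⟩

lemma branchDist_kplus_le_branchDist_kminus {k : ℕ} (hk : 1 ≤ k) (hkn : k ≤ T.leaves.ncard) :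
    T.branchDist (T.kplus k) ≤ T.branchDist (T.kminus k) := by
  obtain ⟨hkm, hkm_br, -⟩ := hh.kminus_spec hk
  obtain ⟨hkp, hkp_br⟩ := hh.kplus_spec hkn
  obtain ⟨hdm, hdmc, -⟩ := hh.branchDist_spec hkm_br
  obtain ⟨-, hdpc, -⟩ := hh.branchDist_spec hkp_br
  by_contra hlt
  replace hlt := not_le.mp hlt
  have hc := hh.ncard_tops_le_ncard_tops (sub_le_sub_left hlt.le h) (by linarith)
  rw [← hh.ccount_eq, ← hh.ccount_eq, hdmc, hdpc] at hc
  have heq : T.kminus k = T.kplus k := by omega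
  exact hlt.ne (by rw [heq])

lemma kplus_le_ncard_tops {k : ℕ} (hk : 1 ≤ k) {t : ℝ}
    (ht : h - T.branchDist (T.kminus k) < t) (hth : t ≤ h) :
    T.kplus k ≤ (T.tops t).ncard := by
  obtain ⟨-, hkm_br, hkm_max⟩ := hh.kminus_spec hk
  obtain ⟨hdm, hdmc, -, hdm_min⟩ := hh.branchDist_spec hkm_br
  have hc : T.ccount (h - t) = (T.tops t).ncard := by rw [hh.ccount_eq, sub_sub_cancel]
  have hbr : T.IsBranchingValue (T.tops t).ncard := ⟨h - t, by linarith, hc⟩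
  have hge : T.kminus k ≤ (T.tops t).ncard := by
    rw [← hdmc, hh.ccount_eq]
    exact hh.ncard_tops_le_ncard_tops ht.le hth
  by_cases hck : (T.tops t).ncard ≤ k
  · have := hdm_min (h - t) (by linarith) (hc.trans (le_antisymm (hkm_max _ hck hbr) hge))
    linarith
  · exact Nat.sInf_le ⟨(not_le.mp hck).le, hbr⟩

section Crossings

variable {Y : Set V} (hY : Y ⊆ T.leaves) {t : ℝ} (ht : t ≤ h)
include hY ht

lemma crossings_eq_ncard_image : T.crossings Y t = (T.top t '' Y).ncard := by
  rw [crossings]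
  congr 1
  ext w
  constructor
  · rintro ⟨hw, y, hy, -, hwy⟩
    exact ⟨y, hy, top_eq_of_anc hw hwy⟩
  · rintro ⟨y, hy, rfl⟩
    have hyt := hh.le_hgt_of_isLeaf ht (hY hy)
    exact ⟨top_mem_tops hyt, y, hy, hY hy, anc_top hyt⟩

lemma crossings_le_min : T.crossings Y t ≤ min Y.ncard (T.tops t).ncard := by
  rw [hh.crossings_eq_ncard_image hY ht]
  refine le_min (Set.ncard_image_le (Set.toFinite _)) (Set.ncard_le_ncard ?_)
  rw [← hh.image_top_leaves ht]
  exact Set.image_mono hY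

lemma crossings_eq_ncard_iff_injOn : T.crossings Y t = Y.ncard ↔ Set.InjOn (T.top t) Y := by
  rw [hh.crossings_eq_ncard_image hY ht]
  exact Set.ncard_image_iff (Set.toFinite _)

lemma crossings_eq_ncard_tops_iff :
    T.crossings Y t = (T.tops t).ncard ↔ ∀ x ∈ T.leaves, ∃ y ∈ Y, T.top t y = T.top t x := by
  rw [hh.crossings_eq_ncard_image hY ht, ← hh.image_top_leaves ht]
  have hsub : T.top t '' Y ⊆ T.top t '' T.leaves := Set.image_mono hY
  constructor
  · intro hc x hx
    have hx' : T.top t x ∈ T.top t '' Y :=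
      (Set.eq_of_subset_of_ncard_le hsub hc.ge) ▸ Set.mem_image_of_mem _ hx
    exact hx'
  · intro hall
    rw [hsub.antisymm (Set.image_subset_iff.mpr fun x hx => hall x hx)]

end Crossings

lemma crossings_eq_min_of_injOn {k : ℕ} {tm tp t : ℝ} {A : Set V} (hA : A ⊆ T.leaves)
    (hAk : A.ncard = k) (hmeet : ∀ x ∈ T.leaves, ∃ a ∈ A, T.top tm a = T.top tm x)
    (hsep : Set.InjOn (T.top tp) A) (hlow : (T.tops tm).ncard ≤ k)
    (hktp : k ≤ (T.tops tp).ncard)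
    (hhigh : ∀ t, tm < t → t ≤ h → (T.tops tp).ncard ≤ (T.tops t).ncard)
    (htm : tm ≤ h) (htp : tp ≤ h) (ht : t ≤ h) :
    T.crossings A t = min k (T.tops t).ncard := by
  by_cases httm : t ≤ tm
  · have hall : T.crossings A t = (T.tops t).ncard := by
      refine (hh.crossings_eq_ncard_tops_iff hA ht).mpr fun x hx => ?_
      obtain ⟨a, ha, hax⟩ := hmeet x hx
      refine ⟨a, ha, ?_⟩
      rw [← top_top httm (hh.le_hgt_of_isLeaf htm (hA ha)), hax,
        top_top httm (hh.le_hgt_of_isLeaf htm hx)]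
    rw [hall, min_eq_right ((hh.ncard_tops_le_ncard_tops httm htm).trans hlow)]
  · replace httm := not_le.mp httm
    have hinj : Set.InjOn (T.top t) A := by
      intro a ha b hb hab
      have hat := hh.le_hgt_of_isLeaf htp (hA ha)
      have hbt := hh.le_hgt_of_isLeaf htp (hA hb)
      refine hsep ha hb ?_
      rcases le_total tp t with htpt | htpt
      · rw [← top_top htpt (hh.le_hgt_of_isLeaf ht (hA ha)), hab,
          top_top htpt (hh.le_hgt_of_isLeaf ht (hA hb))]
      · refine hh.injOn_top_of_ncard_tops_eq htpt htp
          (le_antisymm (hh.ncard_tops_le_ncard_tops htpt htp) (hhigh t httm ht))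
          (top_mem_tops hat) (top_mem_tops hbt) ?_
        rw [top_top htpt hat, top_top htpt hbt, hab]
    rw [(hh.crossings_eq_ncard_iff_injOn hA ht).mpr hinj, hAk,
      min_eq_left (hktp.trans (hhigh t httm ht))]

lemma isMaxPD_of_crossings_eq_min {k : ℕ} {A : Set V} (hA : A ⊆ T.leaves) (hAk : A.ncard = k)
    (hcross : ∀ t ∈ T.hgtSet, T.crossings A t = min k (T.tops t).ncard) : T.IsMaxPD k A :=
  ⟨hA, hAk, fun _ hY hYk => T.PD_le_PD_of_crossings_le fun t ht =>
    hcross t ht ▸ hYk ▸ hh.crossings_le_min hY (hh.le_height_of_mem_hgtSet ht)⟩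

lemma crossings_eq_min_of_isMaxPD {k : ℕ} (hk : 1 ≤ k) {A B : Set V} (hA : A ⊆ T.leaves)
    (hAk : A.ncard = k) (hcross : ∀ t ∈ T.hgtSet, T.crossings A t = min k (T.tops t).ncard)
    (hB : T.IsMaxPD k B) : ∀ t ∈ T.hgtSet, T.crossings B t = min k (T.tops t).ncard := by
  obtain ⟨hBl, hBk, hBmax⟩ := hB
  intro t ht
  rcases (T.nonneg_of_mem_hgtSet ht).eq_or_lt with rfl | hpos
  · have hBne : (T.top 0 '' B).Nonempty :=
      (Set.nonempty_of_ncard_ne_zero (by omega : B.ncard ≠ 0)).image _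
    have hsub : T.top 0 '' B ⊆ {T.root} :=
      T.tops_zero ▸ Set.image_subset_iff.mpr fun b _ => top_mem_tops (T.hgt_nonneg b)
    rw [hh.crossings_eq_ncard_image hBl hh.height_nonneg, hBne.subset_singleton_iff.mp hsub,
      T.tops_zero, Set.ncard_singleton, min_eq_right hk]
  · have hle : ∀ s ∈ T.hgtSet, T.crossings B s ≤ T.crossings A s := fun s hs =>
      hcross s hs ▸ hBk ▸ hh.crossings_le_min hBl (hh.le_height_of_mem_hgtSet hs)
    rw [← hcross t ht]
    exact T.crossings_eq_of_PD_le hle (hBmax A hA hAk) t ht hpos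

lemma selection_spec {d : ℝ} (hd : 0 ≤ d) {φ : V → ℝ} {Z S : Set V} (hZ : Z ⊆ T.leaves)
    (hS : S ⊆ T.leaves)
    (hsel : ∀ C ∈ T.components (T.R d), ∃ x, Z ∩ C = {x} ∧ ∀ y ∈ S ∩ C, φ y ≤ φ x) :
    Set.InjOn (T.top (h - d)) Z ∧ (∀ y ∈ T.leaves, ∃ x ∈ Z, T.top (h - d) x = T.top (h - d) y) ∧
      ∀ x ∈ Z, ∀ y ∈ S, T.top (h - d) y = T.top (h - d) x → φ y ≤ φ x := by
  have ht : h - d ≤ h := by linarith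
  have hleaf {y : V} (hy : T.IsLeaf y) : h - d ≤ T.hgt y := hh.le_hgt_of_isLeaf ht hy
  rw [hh.components_R_eq] at hsel
  have hsel' {y : V} (hy : T.IsLeaf y) := hsel _ ⟨_, top_mem_tops (hleaf hy), rfl⟩
  refine ⟨fun a ha b hb hab => ?_, fun y hy => ?_, fun x hx y hy hyx => ?_⟩
  · obtain ⟨x, hx, -⟩ := hsel' (hZ ha)
    have ha' : a ∈ Z ∩ T.clade (T.top (h - d) a) := ⟨ha, anc_top (hleaf (hZ ha))⟩
    have hb' : b ∈ Z ∩ T.clade (T.top (h - d) a) := ⟨hb, hab ▸ anc_top (hleaf (hZ hb))⟩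
    rw [hx] at ha' hb'
    exact ha'.trans hb'.symm
  · obtain ⟨x, hx, -⟩ := hsel' hy
    have hx' : x ∈ Z ∩ T.clade (T.top (h - d) y) := hx ▸ rfl
    exact ⟨x, hx'.1, top_eq_of_anc (top_mem_tops (hleaf hy)) hx'.2⟩
  · obtain ⟨x', hx', hmax⟩ := hsel' (hZ hx)
    have hxx' : x ∈ Z ∩ T.clade (T.top (h - d) x) := ⟨hx, anc_top (hleaf (hZ hx))⟩
    rw [hx', Set.mem_singleton_iff] at hxx'
    subst hxx'
    exact hmax y ⟨hy, hyx ▸ anc_top (hleaf (hS hy))⟩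

/-- Push each leaf of `B` to the representative in `P` of its component at level `tp`; this
raises `φ`, and the image meets the classes of `A₀` at the coarser level `tm`, so the greedy
exchange applies. -/
lemma sum_le_sum_of_injOn_top {tm tp : ℝ} (htm : tm ≤ tp) (htp : tp ≤ h) {φ : V → ℝ}
    {P A₀ A B : Set V} (hP : P ⊆ T.leaves)
    (hPex : ∀ y ∈ T.leaves, ∃ x ∈ P, T.top tp x = T.top tp y)
    (hPmax : ∀ x ∈ P, ∀ y ∈ T.leaves, T.top tp y = T.top tp x → φ y ≤ φ x)
    (hA₀inj : Set.InjOn (T.top tm) A₀)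
    (hA₀max : ∀ x ∈ A₀, ∀ y ∈ P, T.top tm y = T.top tm x → φ y ≤ φ x)
    (hA₀A : A₀ ⊆ A) (htop : ∀ q ∈ A \ A₀, ∀ p ∈ P \ A, φ p ≤ φ q)
    (hB : B ⊆ T.leaves) (hBk : B.ncard = A.ncard) (hBsep : Set.InjOn (T.top tp) B)
    (hBmeet : ∀ x ∈ A₀, ∃ b ∈ B, T.top tm b = T.top tm x) :
    ∑ x ∈ B.toFinite.toFinset, φ x ≤ ∑ x ∈ A.toFinite.toFinset, φ x := by
  choose! p hpP hptop using hPex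
  have hpinj : Set.InjOn p B := fun a ha b hb hab =>
    hBsep ha hb (by rw [← hptop a (hB ha), hab, hptop b (hB hb)])
  have hpclass : ∀ b ∈ B, T.top tm (p b) = T.top tm b := fun b hb => by
    rw [← top_top htm (hh.le_hgt_of_isLeaf htp (hP (hpP b (hB hb)))), hptop b (hB hb),
      top_top htm (hh.le_hgt_of_isLeaf htp (hB hb))]
  have hpinj' : Set.InjOn p B.toFinite.toFinset := by rwa [Set.Finite.coe_toFinset]
  calc ∑ x ∈ B.toFinite.toFinset, φ x ≤ ∑ x ∈ B.toFinite.toFinset.image p, φ x := by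
        rw [Finset.sum_image hpinj']
        refine Finset.sum_le_sum fun b hb => ?_
        have hb' := B.toFinite.mem_toFinset.mp hb
        exact hPmax _ (hpP b (hB hb')) b (hB hb') (hptop b (hB hb')).symm
    _ ≤ ∑ x ∈ A.toFinite.toFinset, φ x := by
        refine Finset.sum_le_sum_of_greedy (T.top tm) (P := P.toFinite.toFinset)
          (Set.Finite.toFinset_subset_toFinset.mpr hA₀A) ?_ ?_ (by rwa [Set.Finite.coe_toFinset])
          (fun a ha y hy => hA₀max a (A₀.toFinite.mem_toFinset.mp ha) y
            (P.toFinite.mem_toFinset.mp hy)) ?_ ?_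
        · exact Finset.image_subset_iff.mpr fun b hb =>
            P.toFinite.mem_toFinset.mpr (hpP b (hB (B.toFinite.mem_toFinset.mp hb)))
        · rw [Finset.card_image_of_injOn hpinj', ← Set.ncard_eq_toFinset_card,
            ← Set.ncard_eq_toFinset_card, hBk]
        · intro a ha
          obtain ⟨b, hb, hba⟩ := hBmeet a (A₀.toFinite.mem_toFinset.mp ha)
          exact ⟨p b, Finset.mem_image_of_mem p (B.toFinite.mem_toFinset.mpr hb),
            (hpclass b hb).trans hba⟩
        · intro a ha q hq
          simp only [Finset.mem_sdiff, Set.Finite.mem_toFinset] at ha hq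
          exact htop a ha q hq

end LeavesAtHeight

end PhyloTree

theorem maximiseLinearSum_correct_general
    {V : Type} [Fintype V] [DecidableEq V] (T : PhyloTree V)
    (hU : T.Ultrametric) (φ : V → ℝ) (k : ℕ)
    (hk : 1 ≤ k) (hkn : k ≤ T.leaves.ncard)
    (P A₀ A : Set V)
    (hPleaves : P ⊆ T.leaves)
    -- `P` holds exactly one `φ`-maximal leaf from each short component:
    (hPshort : ∀ C ∈ T.components (T.R (T.branchDist (T.kplus k))),
      ∃ x, P ∩ C = {x} ∧ ∀ y ∈ C ∩ T.leaves, φ y ≤ φ x)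
    -- `A₀` holds exactly one element of `P` from each tall component,
    -- `φ`-maximal among the elements of `P` in that component:
    (hA₀P : A₀ ⊆ P)
    (hA₀tall : ∀ C ∈ T.components (T.R (T.branchDist (T.kminus k))),
      ∃ x, A₀ ∩ C = {x} ∧ ∀ y ∈ P ∩ C, φ y ≤ φ x)
    -- `A` extends `A₀` inside `P` to size `k`, using remaining elements of `P`
    -- with the largest `φ`-values:
    (hA₀A : A₀ ⊆ A) (hAP : A ⊆ P) (hAcard : A.ncard = k)
    (htop : ∀ q ∈ A \ A₀, ∀ p ∈ P \ A, φ p ≤ φ q) :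
    T.IsMaxPD k A ∧
      ∀ B : Set V, T.IsMaxPD k B →
        ∑ x ∈ B.toFinite.toFinset, φ x ≤ ∑ x ∈ A.toFinite.toFinset, φ x := by
  obtain ⟨h, hh⟩ := hU.exists_leavesAtHeight
  obtain ⟨hkm, hkm_br, -⟩ := hh.kminus_spec hk
  obtain ⟨hkp, hkp_br⟩ := hh.kplus_spec hkn
  obtain ⟨hdm, hdmc, hdm_mem, -⟩ := hh.branchDist_spec hkm_br
  obtain ⟨hdp, hdpc, hdp_mem, -⟩ := hh.branchDist_spec hkp_br
  rw [hh.ccount_eq] at hdmc hdpc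
  have hdpm := hh.branchDist_kplus_le_branchDist_kminus hk hkn
  have htm : h - T.branchDist (T.kminus k) ≤ h := by linarith
  have htp : h - T.branchDist (T.kplus k) ≤ h := by linarith
  have hAl : A ⊆ T.leaves := hAP.trans hPleaves
  obtain ⟨hPinj, hPex, hPmax⟩ := hh.selection_spec hdp hPleaves subset_rfl fun C hC => by
    simpa only [Set.inter_comm C] using hPshort C hC
  obtain ⟨hA₀inj, hA₀ex, hA₀max⟩ := hh.selection_spec hdm (hA₀P.trans hPleaves) hPleaves hA₀tall
  have hA : ∀ t ∈ T.hgtSet, T.crossings A t = min k (T.tops t).ncard := fun t ht =>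
    hh.crossings_eq_min_of_injOn hAl hAcard
      (fun x hx => (hA₀ex x hx).imp fun _ ha => ⟨hA₀A ha.1, ha.2⟩) (hPinj.mono hAP)
      (hdmc.trans_le hkm) (hkp.trans hdpc.ge)
      (fun t ht₁ ht₂ => hdpc.trans_le (hh.kplus_le_ncard_tops hk ht₁ ht₂))
      htm htp (hh.le_height_of_mem_hgtSet ht)
  refine ⟨hh.isMaxPD_of_crossings_eq_min hAl hAcard hA, fun B hB => ?_⟩
  have hBcross := hh.crossings_eq_min_of_isMaxPD hk hAl hAcard hA hB
  refine hh.sum_le_sum_of_injOn_top (by linarith) htp hPleaves hPex hPmax hA₀inj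
    hA₀max hA₀A htop hB.1 (hB.2.1.trans hAcard.symm) ?_ ?_
  · rw [← hh.crossings_eq_ncard_iff_injOn hB.1 htp, hBcross _ hdp_mem, hdpc, hB.2.1,
      min_eq_left hkp]
  · have hmeet := (hh.crossings_eq_ncard_tops_iff hB.1 htm).mp
      (by rw [hBcross _ hdm_mem, hdmc, min_eq_right hkm])
    exact fun x hx => hmeet x (hPleaves (hA₀P hx))

/-- correctness of `MaximiseLinearSum`, Propositions 5 and 6
of the paper.  Let `T` be ultrametric and `1 ≤ k ≤ |X|`.  Suppose `A` is
obtained by the following construction: `P` consists of exactly one leaf from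
each component `C` of `T[R(d_{k⁺})]`, chosen to maximise `φ` among the leaves
of `C`; then, for each component `C` of `T[R(d_{k⁻})]`, one element of `P` in
`C` maximising `φ` among the elements of `P` in `C` is placed in `A`; finally
`A` is completed (within `P`) to size `k` using elements with the largest
`φ`-values among the remaining elements of `P`.  Then `A` is a size-`k` maxPD
set, and its `φ`-sum is at least that of every size-`k` maxPD set `B`. -/
theorem maximiseLinearSum_correct
    {V : Type} [Fintype V] [DecidableEq V] (T : PhyloTree V)
    (hU : T.Ultrametric) (φ : V → ℝ) (k : ℕ)
    (hk : 1 ≤ k) (hkn : k ≤ T.leaves.ncard)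
    (P A₀ A : Set V)
    (hPleaves : P ⊆ T.leaves)
    -- `P` holds exactly one `φ`-maximal leaf from each short component:
    (hPshort : ∀ C ∈ T.components (T.R (T.branchDist (T.kplus k))),
      ∃ x, P ∩ C = {x} ∧ ∀ y ∈ C ∩ T.leaves, φ y ≤ φ x)
    (hPonly : ∀ x ∈ P, ∃ C ∈ T.components (T.R (T.branchDist (T.kplus k))), x ∈ C)
    -- `A₀` holds exactly one element of `P` from each tall component,
    -- `φ`-maximal among the elements of `P` in that component:
    (hA₀P : A₀ ⊆ P)
    (hA₀tall : ∀ C ∈ T.components (T.R (T.branchDist (T.kminus k))),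
      ∃ x, A₀ ∩ C = {x} ∧ ∀ y ∈ P ∩ C, φ y ≤ φ x)
    (hA₀only : ∀ x ∈ A₀, ∃ C ∈ T.components (T.R (T.branchDist (T.kminus k))), x ∈ C)
    -- `A` extends `A₀` inside `P` to size `k`, using remaining elements of `P`
    -- with the largest `φ`-values:
    (hA₀A : A₀ ⊆ A) (hAP : A ⊆ P) (hAcard : A.ncard = k)
    (htop : ∀ q ∈ A \ A₀, ∀ p ∈ P \ A, φ p ≤ φ q) :
    T.IsMaxPD k A ∧
      ∀ B : Set V, T.IsMaxPD k B →
        ∑ x ∈ B.toFinite.toFinset, φ x ≤ ∑ x ∈ A.toFinite.toFinset, φ x :=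
  maximiseLinearSum_correct_general T hU φ k hk hkn P A₀ A hPleaves hPshort hA₀P hA₀tall hA₀A hAP
    hAcard htop
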